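/- Let (X,d) be a metric space and γ a Borel probability measure on X that is positive on every nonempty open set. Suppose there exists a Borel set C ⊆ X with γ(C) > 0 such that for γ-almost every x, the ratio γ(C ∩ B^cl(x,r))/γ(B^cl(x,r)) tends to 0 as r → 0. Then for every p with 1 ≤ p < ∞, the operator norms of the averaging operators are not uniformly bounded: sup_{r>0} ‖A_r‖_{L^p(γ)→L^p(γ)} = ∞. -/

import Mathlib

/-!
If the averaging operators were uniformly bounded on `L^p`, then `A_r f → f` in `L^p` as `r → 0`
for every `f ∈ L^p`: this holds for bounded continuous `f` by dominated convergence, and passes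
to all of `L^p` by density, since the uniform bound makes `A_r f - A_r g` small whenever `f - g`
is. For `f = 1_C`, the hypothesis on `C` says `A_r 1_C → 0` almost everywhere, hence in `L^p`
because `|A_r 1_C| ≤ 1`. So `1_C = 0` in `L^p`, contradicting `γ C > 0`.
-/

open MeasureTheory Metric Filter Topology ENNReal

/-- The averaging operator `A_r f(x) = (1/γ(B^cl(x,r))) ∫_{B^cl(x,r)} f dγ`
over closed balls. -/
noncomputable def avgOp {X : Type*} [MetricSpace X] [MeasurableSpace X]
    (μ : Measure X) (r : ℝ) (f : X → ℝ) (x : X) : ℝ :=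
  (μ (closedBall x r)).toReal⁻¹ * ∫ y in closedBall x r, f y ∂μ

open Set

lemma tendsto_eLpNorm_zero_of_norm_le {α E ι : Type*} [MeasurableSpace α] [NormedAddCommGroup E]
    {μ : Measure α} [IsFiniteMeasure μ] {l : Filter ι} [l.IsCountablyGenerated] {p : ℝ≥0∞}
    (hp : p ≠ ∞) {F : ι → α → E} (hF : ∀ᶠ i in l, AEStronglyMeasurable (F i) μ) {M : ℝ}
    (hFM : ∀ᶠ i in l, ∀ᵐ x ∂μ, ‖F i x‖ ≤ M)
    (hlim : ∀ᵐ x ∂μ, Tendsto (fun i => F i x) l (𝓝 0)) :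
    Tendsto (fun i => eLpNorm (F i) p μ) l (𝓝 0) := by
  rcases eq_or_ne p 0 with rfl | hp0
  · simpa using tendsto_const_nhds
  have hpos : 0 < p.toReal := ENNReal.toReal_pos hp0 hp
  have hlim' : ∀ᵐ x ∂μ, Tendsto (fun i => ‖F i x‖ₑ ^ p.toReal) l (𝓝 0) :=
    hlim.mono fun x hx => by
      have hnorm : Tendsto (fun i => ‖F i x‖ₑ) l (𝓝 0) := by
        simpa [Function.comp_def] using (continuous_enorm.tendsto (0 : E)).comp hx
      simpa [Function.comp_def, ENNReal.zero_rpow_of_pos hpos] using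
        ((ENNReal.continuous_rpow_const (y := p.toReal)).tendsto 0).comp hnorm
  have hfin : ∫⁻ _, ENNReal.ofReal M ^ p.toReal ∂μ ≠ ∞ := by
    rw [lintegral_const]
    exact ENNReal.mul_ne_top (ENNReal.rpow_ne_top_of_nonneg hpos.le ofReal_ne_top)
      (measure_ne_top μ _)
  have hint : Tendsto (fun i => ∫⁻ x, ‖F i x‖ₑ ^ p.toReal ∂μ) l (𝓝 0) := by
    simpa using
      tendsto_lintegral_filter_of_dominated_convergence' (fun _ => ENNReal.ofReal M ^ p.toReal)
        (hF.mono fun i h => h.enorm.pow_const _)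
        (hFM.mono fun i h => h.mono fun x hx => ENNReal.rpow_le_rpow
          (by rw [← ofReal_norm]; exact ENNReal.ofReal_le_ofReal hx) hpos.le)
        hfin hlim'
  simpa [eLpNorm_eq_lintegral_rpow_enorm_toReal hp0 hp,
    ENNReal.zero_rpow_of_pos (inv_pos.2 hpos)] using hint.ennrpow_const (1 / p.toReal)

section AveragingOperator

variable {X : Type*} [MetricSpace X] [MeasurableSpace X] (μ : Measure X)

lemma avgOp_eq_setAverage (r : ℝ) (f : X → ℝ) (x : X) :
    avgOp μ r f x = ⨍ y in closedBall x r, f y ∂μ := by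
  rw [avgOp, setAverage_eq, smul_eq_mul, measureReal_def]

lemma avgOp_sub (r : ℝ) {f g : X → ℝ} (hf : Integrable f μ) (hg : Integrable g μ) (x : X) :
    avgOp μ r (f - g) x = avgOp μ r f x - avgOp μ r g x := by
  simp only [avgOp, Pi.sub_apply, integral_sub hf.restrict hg.restrict, mul_sub]

lemma avgOp_indicator_one {C : Set X} (hC : MeasurableSet C) (r : ℝ) (x : X) :
    avgOp μ r (C.indicator 1) x = (μ (C ∩ closedBall x r) / μ (closedBall x r)).toReal := by
  rw [avgOp, integral_indicator_one hC, measureReal_def, Measure.restrict_apply hC,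
    ENNReal.toReal_div, div_eq_inv_mul]

lemma upperSemicontinuous_measure_closedBall [OpensMeasurableSpace X] [IsFiniteMeasure μ]
    (r : ℝ) :
    UpperSemicontinuous fun x => μ (closedBall x r) := by
  intro x a hxa
  have hlim : Tendsto (fun r' => μ (closedBall x r')) (𝓝[>] r) (𝓝 (μ (closedBall x r))) := by
    rw [← biInter_gt_closedBall x r]
    exact tendsto_measure_biInter_gt (fun _ _ => measurableSet_closedBall.nullMeasurableSet)
      (fun _ _ _ h => closedBall_subset_closedBall h) ⟨r + 1, by linarith, measure_ne_top μ _⟩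
  obtain ⟨r', hlt, hr'⟩ := ((hlim.eventually (gt_mem_nhds hxa)).and self_mem_nhdsWithin).exists
  filter_upwards [ball_mem_nhds x (sub_pos.2 hr')] with y hy
  refine (measure_mono (closedBall_subset_closedBall' ?_)).trans_lt hlt
  rw [mem_ball] at hy
  linarith

lemma measurable_measure_closedBall [OpensMeasurableSpace X] [IsFiniteMeasure μ] (r : ℝ) :
    Measurable fun x => μ (closedBall x r) :=
  (upperSemicontinuous_measure_closedBall μ r).measurable

lemma measurable_setIntegral_closedBall [OpensMeasurableSpace X] (r : ℝ) {f : X → ℝ}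
    (hf : Integrable f μ) : Measurable fun x => ∫ y in closedBall x r, f y ∂μ := by
  set ν₁ := μ.withDensity fun y => ENNReal.ofReal (f y)
  set ν₂ := μ.withDensity fun y => ENNReal.ofReal (-f y)
  have : IsFiniteMeasure ν₁ := isFiniteMeasure_withDensity hf.lintegral_lt_top.ne
  have : IsFiniteMeasure ν₂ := isFiniteMeasure_withDensity hf.neg.lintegral_lt_top.ne
  have heq : (fun x => ∫ y in closedBall x r, f y ∂μ) =
      fun x => (ν₁ (closedBall x r)).toReal - (ν₂ (closedBall x r)).toReal := by
    funext x
    rw [integral_eq_lintegral_pos_part_sub_lintegral_neg_part hf.restrict,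
      withDensity_apply _ measurableSet_closedBall, withDensity_apply _ measurableSet_closedBall]
  rw [heq]
  exact (measurable_measure_closedBall ν₁ r).ennreal_toReal.sub
    (measurable_measure_closedBall ν₂ r).ennreal_toReal

variable [IsFiniteMeasure μ]

lemma measurable_avgOp [OpensMeasurableSpace X] (r : ℝ) {f : X → ℝ} (hf : Integrable f μ) :
    Measurable (avgOp μ r f) :=
  (measurable_measure_closedBall μ r).ennreal_toReal.inv.mul
    (measurable_setIntegral_closedBall μ r hf)

variable [μ.IsOpenPosMeasure]

lemma avgOp_const {r : ℝ} (hr : 0 < r) (a : ℝ) (x : X) : avgOp μ r (fun _ => a) x = a := by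
  rw [avgOp_eq_setAverage, setAverage_const (measure_closedBall_pos μ x hr).ne'
    (measure_ne_top μ _)]

lemma abs_avgOp_le {r : ℝ} (hr : 0 < r) {f : X → ℝ} {x : X} {M : ℝ}
    (hM : ∀ y ∈ closedBall x r, |f y| ≤ M) : |avgOp μ r f x| ≤ M := by
  have hball : 0 < μ.real (closedBall x r) :=
    ENNReal.toReal_pos (measure_closedBall_pos μ x hr).ne' (measure_ne_top μ _)
  have hint : |∫ y in closedBall x r, f y ∂μ| ≤ M * μ.real (closedBall x r) :=
    norm_setIntegral_le_of_norm_le_const (f := f) (measure_lt_top μ _) hM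
  rw [avgOp, ← measureReal_def, abs_mul, abs_inv, abs_of_pos hball]
  calc (μ.real (closedBall x r))⁻¹ * |∫ y in closedBall x r, f y ∂μ|
      ≤ (μ.real (closedBall x r))⁻¹ * (M * μ.real (closedBall x r)) := by gcongr
    _ = M := by field_simp

lemma tendsto_avgOp_of_continuousAt {f : X → ℝ} (hf : Integrable f μ) {x : X}
    (hfx : ContinuousAt f x) : Tendsto (fun r => avgOp μ r f x) (𝓝[>] 0) (𝓝 (f x)) := by
  rw [Metric.tendsto_nhdsWithin_nhds]
  intro ε hε
  obtain ⟨δ, hδ, hfδ⟩ := Metric.continuousAt_iff.1 hfx (ε / 2) (half_pos hε)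
  refine ⟨δ, hδ, fun r (hr : 0 < r) hrδ => ?_⟩
  rw [Real.dist_0_eq_abs, abs_of_pos hr] at hrδ
  have hclose : ∀ y ∈ closedBall x r, |(f - fun _ => f x : X → ℝ) y| ≤ ε / 2 := fun y hy =>
    (hfδ ((mem_closedBall.1 hy).trans_lt hrδ)).le
  have := abs_avgOp_le μ hr hclose
  rw [avgOp_sub μ r hf (integrable_const _), avgOp_const μ hr] at this
  exact this.trans_lt (half_lt_self hε)

end AveragingOperator

section BoundedAveragingOperators

open scoped BoundedContinuousFunction

variable {X : Type*} [MetricSpace X] [MeasurableSpace X] {μ : Measure X} [IsFiniteMeasure μ]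
  {p : ℝ≥0∞}

lemma tendsto_eLpNorm_sub_avgOp_boundedContinuous [OpensMeasurableSpace X] [μ.IsOpenPosMeasure]
    (hp : p ≠ ∞) (g : X →ᵇ ℝ) :
    Tendsto (fun r => eLpNorm (⇑g - avgOp μ r g) p μ) (𝓝[>] 0) (𝓝 0) := by
  have hg : Integrable g μ := g.integrable μ
  refine tendsto_eLpNorm_zero_of_norm_le hp (M := 2 * ‖g‖) (Eventually.of_forall fun r =>
    (g.continuous.measurable.sub (measurable_avgOp μ r hg)).aestronglyMeasurable) ?_
    (ae_of_all _ fun x => ?_)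
  · filter_upwards [self_mem_nhdsWithin] with r (hr : 0 < r)
    refine ae_of_all _ fun x => ?_
    have hgx : |g x| ≤ ‖g‖ := g.norm_coe_le_norm x
    have hAx : |avgOp μ r g x| ≤ ‖g‖ := abs_avgOp_le μ hr fun y _ => g.norm_coe_le_norm y
    calc ‖(⇑g - avgOp μ r g) x‖ ≤ |g x| + |avgOp μ r g x| := abs_sub _ _
      _ ≤ 2 * ‖g‖ := by linarith
  · simpa using
      (tendsto_avgOp_of_continuousAt μ hg (x := x) g.continuous.continuousAt).const_sub (g x)

lemma eLpNorm_sub_avgOp_le [OpensMeasurableSpace X] (hp : 1 ≤ p) {r : ℝ} {c : ℝ≥0∞}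
    (hA : ∀ f, MemLp f p μ → eLpNorm (avgOp μ r f) p μ ≤ c * eLpNorm f p μ)
    {f g : X → ℝ} (hf : MemLp f p μ) (hg : MemLp g p μ) :
    eLpNorm (f - avgOp μ r f) p μ ≤
      (1 + c) * eLpNorm (f - g) p μ + eLpNorm (g - avgOp μ r g) p μ := by
  have hfi := hf.integrable hp
  have hgi := hg.integrable hp
  have hsplit : f - avgOp μ r f = (f - g) + avgOp μ r (g - f) + (g - avgOp μ r g) := by
    funext x
    simp only [Pi.add_apply, Pi.sub_apply, avgOp_sub μ r hgi hfi]
    ring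
  calc eLpNorm (f - avgOp μ r f) p μ
      ≤ eLpNorm (f - g) p μ + eLpNorm (avgOp μ r (g - f)) p μ +
          eLpNorm (g - avgOp μ r g) p μ := by
        rw [hsplit]
        refine (eLpNorm_add_le ?_ ?_ hp).trans (add_le_add_left (eLpNorm_add_le ?_ ?_ hp) _)
        · exact ((hf.sub hg).1.add (measurable_avgOp μ r (hgi.sub hfi)).aestronglyMeasurable)
        · exact hg.1.sub (measurable_avgOp μ r hgi).aestronglyMeasurable
        · exact (hf.sub hg).1
        · exact (measurable_avgOp μ r (hgi.sub hfi)).aestronglyMeasurable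
    _ ≤ eLpNorm (f - g) p μ + c * eLpNorm (f - g) p μ + eLpNorm (g - avgOp μ r g) p μ := by
        gcongr
        exact (hA _ (hg.sub hf)).trans_eq (by rw [eLpNorm_sub_comm])
    _ = (1 + c) * eLpNorm (f - g) p μ + eLpNorm (g - avgOp μ r g) p μ := by ring

lemma tendsto_eLpNorm_sub_avgOp [BorelSpace X] [μ.IsOpenPosMeasure] (hp1 : 1 ≤ p) (hp : p ≠ ∞)
    {c : ℝ≥0∞} (hc : c ≠ ∞)
    (hA : ∀ r, 0 < r → ∀ f, MemLp f p μ → eLpNorm (avgOp μ r f) p μ ≤ c * eLpNorm f p μ)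
    {f : X → ℝ} (hf : MemLp f p μ) :
    Tendsto (fun r => eLpNorm (f - avgOp μ r f) p μ) (𝓝[>] 0) (𝓝 0) := by
  rw [ENNReal.tendsto_nhds_zero]
  intro ε hε
  have hε2 : ε / 2 ≠ 0 := (ENNReal.half_pos hε.ne').ne'
  have hε' : ε / 2 / (1 + c) ≠ 0 := (ENNReal.div_pos hε2 (by simp [hc])).ne'
  obtain ⟨g, hfg, hg⟩ := hf.exists_boundedContinuous_eLpNorm_sub_le hp hε'
  have hgA := tendsto_eLpNorm_sub_avgOp_boundedContinuous (μ := μ) hp g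
  filter_upwards [ENNReal.tendsto_nhds_zero.1 hgA (ε / 2) (ENNReal.half_pos hε.ne'),
    self_mem_nhdsWithin] with r hgr (hr : 0 < r)
  calc eLpNorm (f - avgOp μ r f) p μ
      ≤ (1 + c) * eLpNorm (f - ⇑g) p μ + eLpNorm (⇑g - avgOp μ r g) p μ :=
        eLpNorm_sub_avgOp_le hp1 (hA r hr) hf hg
    _ ≤ (1 + c) * (ε / 2 / (1 + c)) + ε / 2 := by gcongr
    _ ≤ ε / 2 + ε / 2 := by gcongr; exact ENNReal.mul_div_le
    _ = ε := ENNReal.add_halves ε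

lemma tendsto_eLpNorm_avgOp_indicator_one [OpensMeasurableSpace X] (hp : p ≠ ∞) {C : Set X}
    (hC : MeasurableSet C)
    (hlim : ∀ᵐ x ∂μ, Tendsto (fun r => μ (C ∩ closedBall x r) / μ (closedBall x r))
      (𝓝[>] 0) (𝓝 0)) :
    Tendsto (fun r => eLpNorm (avgOp μ r (C.indicator 1)) p μ) (𝓝[>] 0) (𝓝 0) := by
  have hint : Integrable (C.indicator (1 : X → ℝ)) μ := (integrable_const 1).indicator hC
  refine tendsto_eLpNorm_zero_of_norm_le hp (M := 1) (Eventually.of_forall fun r =>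
    (measurable_avgOp μ r hint).aestronglyMeasurable) (Eventually.of_forall fun r =>
    ae_of_all _ fun x => ?_) ?_
  · rw [avgOp_indicator_one μ hC, Real.norm_of_nonneg ENNReal.toReal_nonneg]
    refine ENNReal.toReal_le_of_le_ofReal zero_le_one ?_
    rw [ENNReal.ofReal_one]
    exact ENNReal.div_le_of_le_mul (by rw [one_mul]; exact measure_mono inter_subset_right)
  · filter_upwards [hlim] with x hx
    simpa only [Function.comp_def, avgOp_indicator_one μ hC, ENNReal.toReal_zero] using
      (ENNReal.tendsto_toReal ENNReal.zero_ne_top).comp hx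

end BoundedAveragingOperators

/-- If `γ` is a Borel probability measure, positive on nonempty open sets, and there
is a Borel set `C` with `γ(C) > 0` such that `γ(C ∩ B^cl(x,r))/γ(B^cl(x,r)) → 0` as
`r → 0` for `γ`-a.e. `x`, then for every `1 ≤ p < ∞` the averaging operators are not
uniformly bounded on `L^p(γ)`: no finite constant bounds all of them, i.e.
`sup_{r>0} ‖A_r‖_{L^p→L^p} = ∞`. -/
theorem stmt16 {X : Type*} [MetricSpace X] [MeasurableSpace X] [BorelSpace X]
    (γ : Measure X) [IsProbabilityMeasure γ]
    (hpos : ∀ U : Set X, IsOpen U → U.Nonempty → 0 < γ U)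
    (C : Set X) (hCmeas : MeasurableSet C) (hCpos : 0 < γ C)
    (hlim : ∀ᵐ x ∂γ, Tendsto
      (fun r : ℝ => γ (C ∩ closedBall x r) / γ (closedBall x r))
      (𝓝[>] (0 : ℝ)) (𝓝 0)) :
    ∀ p : ℝ≥0∞, 1 ≤ p → p ≠ ⊤ →
      ∀ c : ℝ≥0∞, c ≠ ⊤ →
        ∃ r : ℝ, 0 < r ∧ ∃ f : X → ℝ, MemLp f p γ ∧
          c * eLpNorm f p γ < eLpNorm (avgOp γ r f) p γ := by
  intro p hp1 hp c hc
  by_contra! hA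
  have hp0 : p ≠ 0 := (zero_lt_one.trans_le hp1).ne'
  have : γ.IsOpenPosMeasure := ⟨fun U hU hne => (hpos U hU hne).ne'⟩
  have hf : MemLp (C.indicator 1 : X → ℝ) p γ :=
    memLp_indicator_const p hCmeas 1 (Or.inr (measure_ne_top γ C))
  have htriangle : ∀ r, eLpNorm (C.indicator 1 : X → ℝ) p γ ≤
      eLpNorm (C.indicator 1 - avgOp γ r (C.indicator 1)) p γ +
        eLpNorm (avgOp γ r (C.indicator 1)) p γ := fun r => by
    have hAf : AEStronglyMeasurable (avgOp γ r (C.indicator 1)) γ :=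
      (measurable_avgOp γ r (hf.integrable hp1)).aestronglyMeasurable
    simpa using eLpNorm_add_le (hf.1.sub hAf) hAf hp1
  have hlim0 := (tendsto_eLpNorm_sub_avgOp hp1 hp hc hA hf).add
    (tendsto_eLpNorm_avgOp_indicator_one hp hCmeas hlim)
  rw [add_zero] at hlim0
  have hzero := nonpos_iff_eq_zero.1 (ge_of_tendsto' hlim0 htriangle)
  change eLpNorm (C.indicator fun _ => (1 : ℝ)) p γ = 0 at hzero
  rw [eLpNorm_indicator_const hCmeas hp0 hp, enorm_one, one_mul,
    ENNReal.rpow_eq_zero_iff_of_pos (one_div_pos.2 (ENNReal.toReal_pos hp0 hp))] at hzero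
  exact hCpos.ne' hzero
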